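/- arXiv:2408.11171 — 2 statements merged into one kernel-verified Lean document; each statement's English description precedes it below -/
import Mathlib

section
/- Let c > 0, λ, τ, θ ∈ ℝ, a > 0, b > 0, and let s ∈ ℝ be such that σ := s² − λ·e^{−τs} > 0; set μ := √σ / c. Let (h_k)_{k≥0} be a sequence of real numbers and suppose that for every k ≥ 1 there exist functions e₁ᵏ, e₂ᵏ : ℝ → ℝ such that: (i) e₁ᵏ is twice continuously differentiable on [−a, 0], satisfies c²·(e₁ᵏ)'' = σ·e₁ᵏ on [−a, 0], e₁ᵏ(−a) = 0 and e₁ᵏ(0) = h_{k−1}; (ii) e₂ᵏ is twice continuously differentiable on [0, b], satisfies c²·(e₂ᵏ)'' = σ·e₂ᵏ on [0, b], e₂ᵏ(b) = 0 and (e₂ᵏ)'(0) = (e₁ᵏ)'(0); (iii) h_k = θ·e₂ᵏ(0) + (1 − θ)·h_{k−1}. Then h_k = (1 − θ − θ·coth(μa)·tanh(μb))ᵏ·h_0 for all k ≥ 0. In particular, for equal subdomains a = b one has h_k = (1 − 2θ)ᵏ·h_0; hence if θ = 1/2 then h_k = 0 for all k ≥ 1, and if 0 < θ < 1 then |h_k|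 ≤ |1 − 2θ|ᵏ·|h_0| and h_k → 0 as k → ∞. -/
/-! Since `x ↦ sinh (μ (x - r))` solves `e'' = μ² e`, its Wronskian with any solution is
constant; taking `r` at a Dirichlet end gives the Dirichlet-to-Neumann relations. So the
Dirichlet solve on `[-a, 0]` with interface value `g` has flux `μ coth (μ a) g` at `0`, the
Neumann solve on `[0, b]` with that flux has interface value `-tanh (μ b) coth (μ a) g`, and
each relaxed sweep multiplies `g` by `1 - θ - θ coth (μ a) tanh (μ b)`, which is `1 - 2θ`
when `a = b`. -/

open Set Filter

/-- The hyperbolic cotangent. -/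
noncomputable def coth (x : ℝ) : ℝ := Real.cosh x / Real.sinh x

lemma coth_mul_tanh {x : ℝ} (hx : x ≠ 0) : coth x * Real.tanh x = 1 := by
  have hsinh : Real.sinh x ≠ 0 := Real.sinh_ne_zero.mpr hx
  rw [coth, Real.tanh_eq_sinh_div_cosh]
  field_simp

section SinhWronskian

variable {p q μ : ℝ} {f : ℝ → ℝ}

lemma wronskian_sinh_eq (hpq : p < q) (hf : ContDiffOn ℝ 2 f (Icc p q))
    (hode : ∀ x ∈ Icc p q,
      derivWithin (derivWithin f (Icc p q)) (Icc p q) x = μ ^ 2 * f x) (r : ℝ) :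
    derivWithin f (Icc p q) q * Real.sinh (μ * (q - r))
        - f q * (μ * Real.cosh (μ * (q - r)))
      = derivWithin f (Icc p q) p * Real.sinh (μ * (p - r))
        - f p * (μ * Real.cosh (μ * (p - r))) := by
  set I := Icc p q
  set f' := derivWithin f I
  have hf' : ContDiffOn ℝ 1 f' I := hf.derivWithin (uniqueDiffOn_Icc hpq) (by norm_num)
  set W : ℝ → ℝ := fun x ↦
    f' x * Real.sinh (μ * (x - r)) - f x * (μ * Real.cosh (μ * (x - r)))
  have hW : ∀ x ∈ I, HasDerivWithinAt W 0 I x := by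
    intro x hx
    have hlin : HasDerivAt (fun x ↦ μ * (x - r)) μ x := by
      simpa using ((hasDerivAt_id x).sub_const r).const_mul μ
    have hf'x : HasDerivWithinAt f' (μ ^ 2 * f x) I x :=
      hode x hx ▸ ((hf'.differentiableOn (by norm_num)) x hx).hasDerivWithinAt
    have hfx : HasDerivWithinAt f (f' x) I x :=
      ((hf.differentiableOn (by norm_num)) x hx).hasDerivWithinAt
    exact ((hf'x.mul hlin.sinh.hasDerivWithinAt).sub
      (hfx.mul (hlin.cosh.const_mul μ).hasDerivWithinAt)).congr_deriv (by ring)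
  have hWcont : ContinuousOn W I :=
    (hf'.continuousOn.mul (by fun_prop)).sub (hf.continuousOn.mul (by fun_prop))
  exact constant_of_has_deriv_right_zero hWcont
    (fun x hx ↦ (hW x (Ico_subset_Icc_self hx)).mono_of_mem_nhdsWithin
      (Icc_mem_nhdsGE_of_mem hx)) q (right_mem_Icc.mpr hpq.le)

lemma derivWithin_right_mul_sinh_of_left_eq_zero (hpq : p < q)
    (hf : ContDiffOn ℝ 2 f (Icc p q))
    (hode : ∀ x ∈ Icc p q,
      derivWithin (derivWithin f (Icc p q)) (Icc p q) x = μ ^ 2 * f x)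
    (hp : f p = 0) :
    derivWithin f (Icc p q) q * Real.sinh (μ * (q - p))
      = μ * f q * Real.cosh (μ * (q - p)) := by
  have hW := wronskian_sinh_eq hpq hf hode p
  rw [hp, sub_self, mul_zero, Real.sinh_zero] at hW
  linarith

lemma derivWithin_left_mul_sinh_of_right_eq_zero (hpq : p < q)
    (hf : ContDiffOn ℝ 2 f (Icc p q))
    (hode : ∀ x ∈ Icc p q,
      derivWithin (derivWithin f (Icc p q)) (Icc p q) x = μ ^ 2 * f x)
    (hq : f q = 0) :
    derivWithin f (Icc p q) p * Real.sinh (μ * (q - p))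
      = -(μ * f p * Real.cosh (μ * (q - p))) := by
  have hW := wronskian_sinh_eq hpq hf hode q
  rw [hq, sub_self, mul_zero, Real.sinh_zero, ← neg_sub q p, mul_neg, Real.sinh_neg,
    Real.cosh_neg] at hW
  linarith

end SinhWronskian

lemma dirichletNeumann_interface_step {a b μ θ g g' : ℝ} (ha : 0 < a) (hb : 0 < b)
    (hμ : 0 < μ) {e₁ e₂ : ℝ → ℝ}
    (he₁ : ContDiffOn ℝ 2 e₁ (Icc (-a) 0))
    (he₁ode : ∀ x ∈ Icc (-a) 0,
      derivWithin (derivWithin e₁ (Icc (-a) 0)) (Icc (-a) 0) x = μ ^ 2 * e₁ x)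
    (he₁a : e₁ (-a) = 0) (he₁0 : e₁ 0 = g)
    (he₂ : ContDiffOn ℝ 2 e₂ (Icc 0 b))
    (he₂ode : ∀ x ∈ Icc 0 b,
      derivWithin (derivWithin e₂ (Icc 0 b)) (Icc 0 b) x = μ ^ 2 * e₂ x)
    (he₂b : e₂ b = 0)
    (hflux : derivWithin e₂ (Icc 0 b) 0 = derivWithin e₁ (Icc (-a) 0) 0)
    (hrelax : g' = θ * e₂ 0 + (1 - θ) * g) :
    g' = (1 - θ - θ * coth (μ * a) * Real.tanh (μ * b)) * g := by
  have hdir := derivWithin_right_mul_sinh_of_left_eq_zero (neg_lt_zero.mpr ha) he₁ he₁ode he₁a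
  have hneu := derivWithin_left_mul_sinh_of_right_eq_zero hb he₂ he₂ode he₂b
  rw [he₁0, sub_neg_eq_add, zero_add] at hdir
  rw [sub_zero, hflux] at hneu
  have hsinh : Real.sinh (μ * a) ≠ 0 := by positivity
  have hcosh : Real.cosh (μ * b) ≠ 0 := (Real.cosh_pos _).ne'
  have he₂0 : μ * (e₂ 0 * (Real.sinh (μ * a) * Real.cosh (μ * b)))
      = μ * (-(Real.cosh (μ * a) * Real.sinh (μ * b)) * g) := by
    linear_combination Real.sinh (μ * a) * hneu - Real.sinh (μ * b) * hdir
  rw [hrelax, coth, Real.tanh_eq_sinh_div_cosh]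
  field_simp
  linear_combination θ * mul_left_cancel₀ hμ.ne' he₂0

lemma eq_pow_mul_of_succ_eq_mul {h : ℕ → ℝ} {ρ : ℝ} (hstep : ∀ k, h (k + 1) = ρ * h k)
    (k : ℕ) : h k = ρ ^ k * h 0 := by
  induction k with
  | zero => simp
  | succ k ih => rw [hstep, ih, pow_succ]; ring

theorem dnwr_delay_wave_convergence
    (c lam τ θ a b s : ℝ) (hc : 0 < c) (ha : 0 < a) (hb : 0 < b)
    (hσ : 0 < s ^ 2 - lam * Real.exp (-τ * s))
    (μ : ℝ) (hμ : μ = Real.sqrt (s ^ 2 - lam * Real.exp (-τ * s)) / c)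
    (h : ℕ → ℝ)
    (hiter : ∀ k : ℕ, ∃ e₁ e₂ : ℝ → ℝ,
      ContDiffOn ℝ 2 e₁ (Icc (-a) 0) ∧
      (∀ x ∈ Icc (-a) 0,
        c ^ 2 * derivWithin (derivWithin e₁ (Icc (-a) 0)) (Icc (-a) 0) x
          = (s ^ 2 - lam * Real.exp (-τ * s)) * e₁ x) ∧
      e₁ (-a) = 0 ∧ e₁ 0 = h k ∧
      ContDiffOn ℝ 2 e₂ (Icc 0 b) ∧
      (∀ x ∈ Icc 0 b,
        c ^ 2 * derivWithin (derivWithin e₂ (Icc 0 b)) (Icc 0 b) x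
          = (s ^ 2 - lam * Real.exp (-τ * s)) * e₂ x) ∧
      e₂ b = 0 ∧
      derivWithin e₂ (Icc 0 b) 0 = derivWithin e₁ (Icc (-a) 0) 0 ∧
      h (k + 1) = θ * e₂ 0 + (1 - θ) * h k) :
    (∀ k : ℕ, h k = (1 - θ - θ * coth (μ * a) * Real.tanh (μ * b)) ^ k * h 0) ∧
    (a = b →
      (∀ k : ℕ, h k = (1 - 2 * θ) ^ k * h 0) ∧
      (θ = 1 / 2 → ∀ k : ℕ, 1 ≤ k → h k = 0) ∧
      (0 < θ → θ < 1 →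
        (∀ k : ℕ, |h k| ≤ |1 - 2 * θ| ^ k * |h 0|) ∧
        Tendsto h atTop (nhds 0))) := by
  have hμpos : 0 < μ := by rw [hμ]; positivity
  have hσμ : s ^ 2 - lam * Real.exp (-τ * s) = c ^ 2 * μ ^ 2 := by
    rw [hμ, div_pow, Real.sq_sqrt hσ.le]
    field_simp
  have hnormalize : ∀ {I : Set ℝ} {e : ℝ → ℝ},
      (∀ x ∈ I, c ^ 2 * derivWithin (derivWithin e I) I x
        = (s ^ 2 - lam * Real.exp (-τ * s)) * e x) →
      ∀ x ∈ I, derivWithin (derivWithin e I) I x = μ ^ 2 * e x := fun hode x hx ↦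
    mul_left_cancel₀ (pow_ne_zero 2 hc.ne') ((hode x hx).trans (by rw [hσμ]; ring))
  have hgeom := eq_pow_mul_of_succ_eq_mul fun k ↦ by
    obtain ⟨e₁, e₂, he₁, he₁ode, he₁a, he₁0, he₂, he₂ode, he₂b, hflux, hrelax⟩ := hiter k
    exact dirichletNeumann_interface_step ha hb hμpos he₁ (hnormalize he₁ode) he₁a he₁0
      he₂ (hnormalize he₂ode) he₂b hflux hrelax
  refine ⟨hgeom, fun hab ↦ ?_⟩
  subst hab
  have hsym : ∀ k, h k = (1 - 2 * θ) ^ k * h 0 := fun k ↦ by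
    rw [hgeom, mul_assoc θ, coth_mul_tanh (by positivity)]
    ring
  refine ⟨hsym, fun hθ k hk ↦ ?_, fun hθ₀ hθ₁ ↦ ⟨fun k ↦ ?_, ?_⟩⟩
  · rw [hsym, hθ]
    norm_num [zero_pow (by omega : k ≠ 0)]
  · rw [hsym, abs_mul, abs_pow]
  · have hρ : |1 - 2 * θ| < 1 := abs_lt.mpr ⟨by linarith, by linarith⟩
    simpa [← hsym] using (tendsto_pow_atTop_nhds_zero_of_abs_lt_one hρ).mul_const (h 0)
end

section
/- Let c > 0, λ, τ, θ ∈ ℝ, a > 0, b > 0, and let s ∈ ℝ be such that σ := s² − λ·e^{−τs} > 0; set μ := √σ / c. Let (g_k)_{k≥0} be a sequence of real numbers and suppose that for every k ≥ 1 there exist functions e₁ᵏ, φ₁ᵏ (twice continuously differentiable on [−a, 0], satisfying c²·f'' = σ·f on [−a, 0] and f(−a) = 0) and e₂ᵏ, φ₂ᵏ (twice continuously differentiable on [0, b], satisfying c²·f'' = σ·f on [0, b] and f(b) = 0) such that e₁ᵏ(0) = g_{k−1}, e₂ᵏ(0) = g_{k−1}, (φ₁ᵏ)'(0) = (e₁ᵏ)'(0)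 − (e₂ᵏ)'(0), (φ₂ᵏ)'(0) = (e₂ᵏ)'(0) − (e₁ᵏ)'(0), and g_k = g_{k−1} − θ·(φ₁ᵏ(0) + φ₂ᵏ(0)). Then g_k = (1 − θ·(2 + tanh(μa)/tanh(μb) + tanh(μb)/tanh(μa)))ᵏ·g_0 for all k ≥ 0. In particular, for equal subdomains a = b one has g_k = (1 − 4θ)ᵏ·g_0; hence if θ = 1/4 then g_k = 0 for all k ≥ 1, and if 0 < θ < 1/2 then |g_k| ≤ |1 − 4θ|ᵏ·|g_0| and g_k → 0 as k → ∞. -/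
/-!
On each subdomain the Laplace-transformed error solves `f'' = μ² f` and vanishes at the outer
boundary, so it is a multiple of `sinh (μ · distance to the boundary)`; its interface flux is
therefore `± μ / tanh (μ ℓ)` times its interface value. Chaining the Dirichlet solves, the flux
jump, and the Neumann solves gives `φ₁(0) + φ₂(0) = (2 + tanh(μa)/tanh(μb) + tanh(μb)/tanh(μa)) g`,
so `g` is a geometric sequence; for `a = b` its ratio is `1 - 4θ`.
-/

open Set Filter Real

theorem Real.tanh_pos {x : ℝ} (hx : 0 < x) : 0 < tanh x := by
  rw [tanh_eq_sinh_div_cosh]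
  exact div_pos (sinh_pos_iff.2 hx) (cosh_pos x)

theorem eq_sqrt_div_sq_mul_of_sq_mul_eq {c σ y z : ℝ} (hc : c ≠ 0) (hσ : 0 ≤ σ)
    (h : c ^ 2 * y = σ * z) : y = (√σ / c) ^ 2 * z := by
  rw [div_pow, sq_sqrt hσ, div_mul_eq_mul_div, eq_div_iff (pow_ne_zero 2 hc), mul_comm]
  exact h

section ScaledODE

variable {m p q : ℝ} {f : ℝ → ℝ}

/- Both `x ↦ (m f x, f' x)` and the `cosh`/`sinh` expression solve the linear system
`z' = m · swap z` with the same initial value; scaling `f` by `m` avoids dividing by `m`. -/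
theorem cosh_sinh_of_derivWithin_derivWithin_eq_sq_mul (hpq : p < q)
    (hf : ContDiffOn ℝ 2 f (Icc p q))
    (hode : ∀ x ∈ Icc p q, derivWithin (derivWithin f (Icc p q)) (Icc p q) x = m ^ 2 * f x)
    {x : ℝ} (hx : x ∈ Icc p q) :
    m * f x = m * f p * cosh (m * (x - p))
        + derivWithin f (Icc p q) p * sinh (m * (x - p)) ∧
      derivWithin f (Icc p q) x = m * f p * sinh (m * (x - p))
        + derivWithin f (Icc p q) p * cosh (m * (x - p)) := by
  set f' := derivWithin f (Icc p q)
  let L : ℝ × ℝ →L[ℝ] ℝ × ℝ := m • (ContinuousLinearEquiv.prodComm ℝ ℝ ℝ : ℝ × ℝ →L[ℝ] ℝ × ℝ)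
  have hL (z : ℝ × ℝ) : L z = (m * z.2, m * z.1) := rfl
  have hf' : ContDiffOn ℝ 1 f' (Icc p q) := hf.derivWithin (uniqueDiffOn_Icc hpq) (by norm_num)
  have hF (t : ℝ) (ht : t ∈ Icc p q) :
      HasDerivWithinAt (fun x => (m * f x, f' x)) (L (m * f t, f' t)) (Icc p q) t := by
    have h₁ : HasDerivWithinAt f (f' t) (Icc p q) t :=
      ((hf.differentiableOn two_ne_zero) t ht).hasDerivWithinAt
    have h₂ : HasDerivWithinAt f' (m ^ 2 * f t) (Icc p q) t :=
      hode t ht ▸ ((hf'.differentiableOn one_ne_zero) t ht).hasDerivWithinAt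
    exact ((h₁.const_mul m).prodMk h₂).congr_deriv (by rw [hL]; ext <;> dsimp only; ring)
  have hG (t : ℝ) : HasDerivAt
      (fun x => (m * f p * cosh (m * (x - p)) + f' p * sinh (m * (x - p)),
        m * f p * sinh (m * (x - p)) + f' p * cosh (m * (x - p))))
      (L (m * f p * cosh (m * (t - p)) + f' p * sinh (m * (t - p)),
        m * f p * sinh (m * (t - p)) + f' p * cosh (m * (t - p)))) t := by
    have hlin : HasDerivAt (fun x => m * (x - p)) m t := by
      simpa using ((hasDerivAt_id t).sub_const p).const_mul m
    refine (((hlin.cosh.const_mul (m * f p)).add (hlin.sinh.const_mul (f' p))).prodMk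
      ((hlin.sinh.const_mul (m * f p)).add (hlin.cosh.const_mul (f' p)))).congr_deriv ?_
    rw [hL]; ext <;> simp only <;> ring
  have hFG := ODE_solution_unique (fun _ => L.lipschitz)
    ((hf.continuousOn.const_smul m).prodMk hf'.continuousOn)
    (fun t ht => (hF t (Ico_subset_Icc_self ht)).mono_of_mem_nhdsWithin (Icc_mem_nhdsGE_of_mem ht))
    (Continuous.continuousOn (by fun_prop)) (fun t _ => (hG t).hasDerivWithinAt) (by simp) hx
  exact Prod.ext_iff.1 hFG

theorem derivWithin_Icc_right_mul_tanh_of_left_eq_zero (hpq : p < q)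
    (hf : ContDiffOn ℝ 2 f (Icc p q))
    (hode : ∀ x ∈ Icc p q, derivWithin (derivWithin f (Icc p q)) (Icc p q) x = m ^ 2 * f x)
    (hp : f p = 0) :
    derivWithin f (Icc p q) q * tanh (m * (q - p)) = m * f q := by
  obtain ⟨hval, hder⟩ :=
    cosh_sinh_of_derivWithin_derivWithin_eq_sq_mul hpq hf hode (right_mem_Icc.2 hpq.le)
  rw [hval, hder, hp, tanh_eq_sinh_div_cosh]
  field_simp [(cosh_pos _).ne']
  ring

theorem derivWithin_Icc_left_mul_tanh_of_right_eq_zero (hpq : p < q)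
    (hf : ContDiffOn ℝ 2 f (Icc p q))
    (hode : ∀ x ∈ Icc p q, derivWithin (derivWithin f (Icc p q)) (Icc p q) x = m ^ 2 * f x)
    (hq : f q = 0) :
    derivWithin f (Icc p q) p * tanh (m * (q - p)) = -(m * f p) := by
  have hval :=
    (cosh_sinh_of_derivWithin_derivWithin_eq_sq_mul hpq hf hode (right_mem_Icc.2 hpq.le)).1
  rw [hq, mul_zero] at hval
  rw [tanh_eq_sinh_div_cosh]
  field_simp [(cosh_pos _).ne']
  linarith

end ScaledODE

/- `dᵢ = eᵢ'(0)`, `ψᵢ = φᵢ(0)`, `tᵢ = tanh (μ ℓᵢ)`; the hypotheses are the interface relations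
of the two Dirichlet solves (`he₁`, `he₂`) and of the two Neumann solves driven by the flux jump. -/
theorem nnwr_correction_sum {m t₁ t₂ g d₁ d₂ ψ₁ ψ₂ : ℝ} (hm : m ≠ 0) (ht₁ : t₁ ≠ 0)
    (ht₂ : t₂ ≠ 0) (he₁ : d₁ * t₁ = m * g) (he₂ : d₂ * t₂ = -(m * g))
    (hψ₁ : (d₁ - d₂) * t₁ = m * ψ₁) (hψ₂ : (d₂ - d₁) * t₂ = -(m * ψ₂)) :
    ψ₁ + ψ₂ = (2 + t₁ / t₂ + t₂ / t₁) * g := by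
  have h : m * ((ψ₁ + ψ₂) * (t₁ * t₂)) = m * ((t₁ + t₂) ^ 2 * g) := by
    linear_combination (-(t₁ * t₂)) * hψ₁ + (t₁ * t₂) * hψ₂ + ((t₁ + t₂) * t₂) * he₁
      - ((t₁ + t₂) * t₁) * he₂
  field_simp
  linear_combination mul_left_cancel₀ hm h

theorem eq_pow_mul_of_succ {M : Type*} [Monoid M] {r : M} {g : ℕ → M}
    (hg : ∀ k, g (k + 1) = r * g k) (k : ℕ) : g k = r ^ k * g 0 := by
  induction k with
  | zero => rw [pow_zero, one_mul]
  | succ k ih => rw [hg, ih, pow_succ', mul_assoc]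

theorem tendsto_nhds_zero_of_eq_pow_mul {ρ : ℝ} {g : ℕ → ℝ} (hρ : |ρ| < 1)
    (hg : ∀ k, g k = ρ ^ k * g 0) : Tendsto g atTop (nhds 0) := by
  simpa [← hg] using (tendsto_pow_atTop_nhds_zero_of_abs_lt_one hρ).mul_const (g 0)

theorem nnwr_delay_wave_convergence
    (c lam τ θ a b s : ℝ) (hc : 0 < c) (ha : 0 < a) (hb : 0 < b)
    (hσ : 0 < s ^ 2 - lam * Real.exp (-τ * s))
    (μ : ℝ) (hμ : μ = Real.sqrt (s ^ 2 - lam * Real.exp (-τ * s)) / c)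
    (g : ℕ → ℝ)
    (hiter : ∀ k : ℕ, ∃ e₁ φ₁ e₂ φ₂ : ℝ → ℝ,
      ContDiffOn ℝ 2 e₁ (Icc (-a) 0) ∧
      (∀ x ∈ Icc (-a) 0,
        c ^ 2 * derivWithin (derivWithin e₁ (Icc (-a) 0)) (Icc (-a) 0) x
          = (s ^ 2 - lam * Real.exp (-τ * s)) * e₁ x) ∧
      e₁ (-a) = 0 ∧
      ContDiffOn ℝ 2 φ₁ (Icc (-a) 0) ∧
      (∀ x ∈ Icc (-a) 0,
        c ^ 2 * derivWithin (derivWithin φ₁ (Icc (-a) 0)) (Icc (-a) 0) x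
          = (s ^ 2 - lam * Real.exp (-τ * s)) * φ₁ x) ∧
      φ₁ (-a) = 0 ∧
      ContDiffOn ℝ 2 e₂ (Icc 0 b) ∧
      (∀ x ∈ Icc 0 b,
        c ^ 2 * derivWithin (derivWithin e₂ (Icc 0 b)) (Icc 0 b) x
          = (s ^ 2 - lam * Real.exp (-τ * s)) * e₂ x) ∧
      e₂ b = 0 ∧
      ContDiffOn ℝ 2 φ₂ (Icc 0 b) ∧
      (∀ x ∈ Icc 0 b,
        c ^ 2 * derivWithin (derivWithin φ₂ (Icc 0 b)) (Icc 0 b) x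
          = (s ^ 2 - lam * Real.exp (-τ * s)) * φ₂ x) ∧
      φ₂ b = 0 ∧
      e₁ 0 = g k ∧ e₂ 0 = g k ∧
      derivWithin φ₁ (Icc (-a) 0) 0
        = derivWithin e₁ (Icc (-a) 0) 0 - derivWithin e₂ (Icc 0 b) 0 ∧
      derivWithin φ₂ (Icc 0 b) 0
        = derivWithin e₂ (Icc 0 b) 0 - derivWithin e₁ (Icc (-a) 0) 0 ∧
      g (k + 1) = g k - θ * (φ₁ 0 + φ₂ 0)) :
    (∀ k : ℕ, g k
        = (1 - θ * (2 + Real.tanh (μ * a) / Real.tanh (μ * b)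
            + Real.tanh (μ * b) / Real.tanh (μ * a))) ^ k * g 0) ∧
    (a = b →
      (∀ k : ℕ, g k = (1 - 4 * θ) ^ k * g 0) ∧
      (θ = 1 / 4 → ∀ k : ℕ, 1 ≤ k → g k = 0) ∧
      (0 < θ → θ < 1 / 2 →
        (∀ k : ℕ, |g k| ≤ |1 - 4 * θ| ^ k * |g 0|) ∧
        Tendsto g atTop (nhds 0))) := by
  have hμ₀ : 0 < μ := hμ ▸ by positivity
  have hode {p q : ℝ} {f : ℝ → ℝ} (h : ∀ x ∈ Icc p q, c ^ 2 * derivWithin (derivWithin f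
      (Icc p q)) (Icc p q) x = (s ^ 2 - lam * exp (-τ * s)) * f x) :
      ∀ x ∈ Icc p q, derivWithin (derivWithin f (Icc p q)) (Icc p q) x = μ ^ 2 * f x :=
    fun x hx => hμ ▸ eq_sqrt_div_sq_mul_of_sq_mul_eq hc.ne' hσ.le (h x hx)
  have hta := (tanh_pos (mul_pos hμ₀ ha)).ne'
  have htb := (tanh_pos (mul_pos hμ₀ hb)).ne'
  have hstep (k : ℕ) : g (k + 1) = (1 - θ * (2 + tanh (μ * a) / tanh (μ * b)
      + tanh (μ * b) / tanh (μ * a))) * g k := by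
    obtain ⟨e₁, φ₁, e₂, φ₂, he₁, he₁', he₁a, hφ₁, hφ₁', hφ₁a, he₂, he₂', he₂b, hφ₂, hφ₂', hφ₂b,
      he₁0, he₂0, hφ₁0, hφ₂0, hg⟩ := hiter k
    have hleft := @derivWithin_Icc_right_mul_tanh_of_left_eq_zero μ (-a) 0
    have hright := @derivWithin_Icc_left_mul_tanh_of_right_eq_zero μ 0 b
    simp only [sub_neg_eq_add, zero_add, sub_zero] at hleft hright
    rw [hg, nnwr_correction_sum hμ₀.ne' hta htb
      (he₁0 ▸ hleft (neg_lt_zero.2 ha) he₁ (hode he₁') he₁a)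
      (he₂0 ▸ hright hb he₂ (hode he₂') he₂b)
      (hφ₁0 ▸ hleft (neg_lt_zero.2 ha) hφ₁ (hode hφ₁') hφ₁a)
      (hφ₂0 ▸ hright hb hφ₂ (hode hφ₂') hφ₂b)]
    ring
  have hgeom := eq_pow_mul_of_succ hstep
  refine ⟨hgeom, fun hab => ?_⟩
  have hgeom₄ : ∀ k, g k = (1 - 4 * θ) ^ k * g 0 := by
    subst hab
    simpa only [div_self htb, show (2 : ℝ) + 1 + 1 = 4 by norm_num, mul_comm θ] using hgeom
  refine ⟨hgeom₄, fun hθ k hk => ?_, fun hθ₀ hθ₁ => ⟨fun k => ?_, ?_⟩⟩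
  · rw [hgeom₄, hθ]
    norm_num [zero_pow (Nat.one_le_iff_ne_zero.1 hk)]
  · rw [hgeom₄, abs_mul, abs_pow]
  · exact tendsto_nhds_zero_of_eq_pow_mul (abs_lt.2 ⟨by linarith, by linarith⟩) hgeom₄
end
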